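/- Let W be the isometric right shift on ℓ²(ℕ) and let L be the operator with domain Dom L = Ran(I − W) defined by L((I − W)x) = i(I + W)x. Then the domain of the adjoint L* satisfies Dom L* = Dom L + ℂ e₀, i.e. v ∈ Dom L* if and only if v = (I − W)x + c e₀ for some x ∈ ℓ²(ℕ) and c ∈ ℂ. In particular, since e₀ ∉ Ran(I − W), the symmetric operator L is not self-adjoint. -/
import Mathlib

open scoped ComplexConjugate

local notation "⟪" x ", " y "⟫" => @inner ℂ _ _ x y

noncomputable section

namespace CayleyAux

abbrev H2 := lp (fun _ : ℕ => ℂ) 2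

lemma inner_single_one (k : ℕ) (f : H2) : ⟪(lp.single 2 k 1 : H2), f⟫ = f k := by
  rw [lp.inner_single_left]
  simp [RCLike.inner_apply]

lemma inner_single_one_right (k : ℕ) (f : H2) :
    ⟪f, (lp.single 2 k 1 : H2)⟫ = conj (f k) := by
  rw [lp.inner_single_right]
  simp [RCLike.inner_apply]

lemma shift_coord (W : H2 →L[ℂ] H2)
    (hW : ∀ n : ℕ, W (lp.single 2 n 1) = lp.single 2 (n + 1) 1) (u : H2) :
    W u 0 = 0 ∧ ∀ n, W u (n + 1) = u n := by
  have hs : HasSum (fun n => lp.single 2 n (u n)) u :=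
    lp.hasSum_single (by norm_num) u
  have hsingle : ∀ n : ℕ, W (lp.single 2 n (u n)) = lp.single 2 (n + 1) (u n) := by
    intro n
    have h1 : (lp.single 2 n (u n) : H2) = u n • (lp.single 2 n (1 : ℂ) : H2) := by
      rw [← lp.single_smul]; norm_num
    have h2 : (lp.single 2 (n + 1) (u n) : H2) = u n • (lp.single 2 (n + 1) (1 : ℂ) : H2) := by
      rw [← lp.single_smul]; norm_num
    rw [h1, h2, map_smul, hW]
  have hs2 : HasSum (fun n => (lp.single 2 (n + 1) (u n) : H2)) (W u) := by
    have := W.hasSum hs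
    simpa [hsingle] using this
  have key : ∀ k : ℕ, HasSum (fun n => (lp.single 2 (n + 1) (u n) : H2) k) (W u k) := by
    intro k
    have := (innerSL ℂ (lp.single 2 k 1 : H2)).hasSum hs2
    simpa [inner_single_one] using this
  constructor
  · have h0 := key 0
    have hfn : (fun n => (lp.single 2 (n + 1) (u n) : H2) 0) = fun _ : ℕ => (0 : ℂ) := by
      funext n
      exact lp.single_apply_ne 2 _ _ (by omega)
    rw [hfn] at h0
    exact (hasSum_zero.unique h0).symm
  · intro m
    have hm := key (m + 1)
    have hfn : (fun n => (lp.single 2 (n + 1) (u n) : H2) (m + 1))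
        = fun n : ℕ => if n = m then u m else (0 : ℂ) := by
      funext n
      by_cases h : n = m
      · subst h; simp [lp.single_apply_self]
      · rw [lp.single_apply_ne 2 _ _ (by omega), if_neg h]
    rw [hfn] at hm
    exact ((hasSum_ite_eq m (u m)).unique hm).symm

lemma lp_const_zero (x : H2) (hs : ∀ n, x n = x 0) : x 0 = 0 := by
  have h1 : Summable fun n : ℕ => ‖x n‖ ^ (2 : ENNReal).toReal :=
    (lp.memℓp x).summable (by norm_num)
  have h2 : Summable fun _ : ℕ => ‖x 0‖ ^ (2 : ENNReal).toReal := by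
    refine h1.congr fun n => ?_
    rw [hs n]
  have h4 : ‖x 0‖ ^ (2 : ENNReal).toReal = 0 :=
    tendsto_nhds_unique tendsto_const_nhds h2.tendsto_atTop_zero
  have h5 : (2 : ENNReal).toReal = 2 := by norm_num
  rw [h5] at h4
  have h6 : ‖x 0‖ ^ (2 : ℝ) = ‖x 0‖ ^ (2 : ℕ) := by
    rw [← Real.rpow_natCast]; norm_num
  rw [h6] at h4
  have : ‖x 0‖ = 0 := by
    have := pow_eq_zero_iff (n := 2) (by norm_num) |>.mp h4
    exact this
  simpa using this

end CayleyAux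

end

open CayleyAux in
theorem cayley_transform_adjoint_domain_eq_domain_add_e0
    (W : lp (fun _ : ℕ => ℂ) 2 →L[ℂ] lp (fun _ : ℕ => ℂ) 2)
    (hiso : ∀ x, ‖W x‖ = ‖x‖)
    (hW : ∀ n : ℕ, W (lp.single 2 n 1) = lp.single 2 (n + 1) 1)
    (L : lp (fun _ : ℕ => ℂ) 2 →ₗ.[ℂ] lp (fun _ : ℕ => ℂ) 2)
    (hdom : ∀ y, y ∈ L.domain ↔ ∃ x, x - W x = y)
    (hL : ∀ (x : lp (fun _ : ℕ => ℂ) 2) (hx : x - W x ∈ L.domain),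
      L ⟨x - W x, hx⟩ = Complex.I • (x + W x)) :
    (∀ v : lp (fun _ : ℕ => ℂ) 2,
        v ∈ L.adjoint.domain ↔ ∃ (x : lp (fun _ : ℕ => ℂ) 2) (c : ℂ),
          v = (x - W x) + c • lp.single 2 0 1) ∧
      (¬ ∃ x : lp (fun _ : ℕ => ℂ) 2, x - W x = lp.single 2 0 1) ∧
      L.adjoint ≠ L := by
  have hW0 : ∀ u : H2, W u 0 = 0 := fun u => (shift_coord W hW u).1
  have hWS : ∀ (u : H2) (n : ℕ), W u (n + 1) = u n := fun u => (shift_coord W hW u).2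
  have hWinner : ∀ a b : H2, ⟪W a, W b⟫ = ⟪a, b⟫ := fun a b =>
    (LinearIsometry.inner_map_map ⟨(W : H2 →ₗ[ℂ] H2), hiso⟩ a b)
  have h0W : ∀ u : H2, ⟪(lp.single 2 0 1 : H2), W u⟫ = 0 := by
    intro u; rw [inner_single_one]; exact hW0 u
  -- density of the domain
  have hdense : Dense (L.domain : Set H2) := by
    rw [Submodule.dense_iff_topologicalClosure_eq_top,
      Submodule.topologicalClosure_eq_top_iff, Submodule.eq_bot_iff]
    intro v hv
    have hvs : ∀ n : ℕ, v (n + 1) = v n := by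
      intro n
      have hmem : (lp.single 2 n 1 : H2) - W (lp.single 2 n 1) ∈ L.domain :=
        (hdom _).mpr ⟨_, rfl⟩
      have h := (Submodule.mem_orthogonal _ v).mp hv _ hmem
      rw [inner_sub_left, inner_single_one, hW n, inner_single_one] at h
      linear_combination -h
    have hconst : ∀ n, v n = v 0 := by
      intro n; induction n with
      | zero => rfl
      | succ m ih => rw [hvs m, ih]
    have h0 : v 0 = 0 := lp_const_zero v hconst
    apply lp.ext
    funext n
    rw [lp.coeFn_zero, Pi.zero_apply, hconst n, h0]
  -- Part 2
  have part2 : ¬ ∃ x : H2, x - W x = lp.single 2 0 1 := by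
    rintro ⟨x, hx⟩
    have hfun : ∀ k, x k - W x k = (lp.single 2 0 1 : H2) k := by
      intro k
      have : (x - W x) k = (lp.single 2 0 1 : H2) k := by rw [hx]
      rwa [lp.coeFn_sub, Pi.sub_apply] at this
    have h0 : x 0 = 1 := by
      have := hfun 0
      rwa [hW0, lp.single_apply_self, sub_zero] at this
    have hs : ∀ n, x (n + 1) = x n := by
      intro n
      have := hfun (n + 1)
      rw [hWS, lp.single_apply_ne 2 _ _ (Nat.succ_ne_zero n)] at this
      exact sub_eq_zero.mp this
    have hconst : ∀ n, x n = x 0 := by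
      intro n; induction n with
      | zero => rfl
      | succ m ih => rw [hs m, ih]
    have := lp_const_zero x hconst
    rw [h0] at this
    exact one_ne_zero this
  -- Part 1
  have part1 : ∀ v : H2,
      v ∈ L.adjoint.domain ↔ ∃ (x : H2) (c : ℂ),
        v = (x - W x) + c • lp.single 2 0 1 := by
    intro v
    constructor
    · intro hv
      set w : H2 := L.adjoint ⟨v, hv⟩ with hwdef
      have hFA := LinearPMap.adjoint_isFormalAdjoint hdense (⟨v, hv⟩ : L.adjoint.domain)
      have hrel : ∀ n : ℕ, Complex.I * (w n - w (n + 1)) = v n + v (n + 1) := by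
        intro n
        have hmem : (lp.single 2 n 1 : H2) - W (lp.single 2 n 1) ∈ L.domain :=
          (hdom _).mpr ⟨_, rfl⟩
        have h0 := hFA ⟨_, hmem⟩
        rw [hL _ hmem] at h0
        have h1 : ⟪w, (lp.single 2 n 1 : H2) - W (lp.single 2 n 1)⟫
            = ⟪v, Complex.I • ((lp.single 2 n 1 : H2) + W (lp.single 2 n 1))⟫ := h0
        rw [hW n] at h1
        rw [inner_sub_right, inner_single_one_right, inner_single_one_right,
          inner_smul_right, inner_add_right, inner_single_one_right,
          inner_single_one_right] at h1
        have h2 := congrArg (starRingEnd ℂ) h1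
        simp only [map_sub, map_add, map_mul, Complex.conj_conj, Complex.conj_I] at h2
        linear_combination Complex.I * h2 - (v n + v (n + 1)) * Complex.I_mul_I
      obtain ⟨x, hx⟩ : ∃ x : H2, ∀ m, x m = 2⁻¹ * (v m - Complex.I * w m) :=
        ⟨(2 : ℂ)⁻¹ • (v - Complex.I • w), fun m => by
          rw [lp.coeFn_smul, Pi.smul_apply, lp.coeFn_sub, Pi.sub_apply,
            lp.coeFn_smul, Pi.smul_apply, smul_eq_mul, smul_eq_mul]⟩
      refine ⟨x, v 0 - x 0, ?_⟩
      apply lp.ext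
      funext k
      have hco : ((x - W x) + (v 0 - x 0) • (lp.single 2 0 1 : H2)) k
          = x k - W x k + (v 0 - x 0) * (lp.single 2 0 1 : H2) k := by
        rw [lp.coeFn_add, Pi.add_apply, lp.coeFn_sub, Pi.sub_apply,
          lp.coeFn_smul, Pi.smul_apply, smul_eq_mul]
      rcases k with _ | n
      · rw [hco, hW0, lp.single_apply_self, hx 0]
        ring
      · rw [hco, hWS, lp.single_apply_ne 2 _ _ (Nat.succ_ne_zero n), hx (n + 1), hx n, hx 0]
        linear_combination -(2 : ℂ)⁻¹ * hrel n
    · rintro ⟨x, c, rfl⟩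
      apply LinearPMap.mem_adjoint_domain_of_exists
      refine ⟨Complex.I • (x + W x - c • lp.single 2 0 1), ?_⟩
      rintro ⟨u, hu⟩
      obtain ⟨z, rfl⟩ := (hdom u).mp hu
      show ⟪Complex.I • (x + W x - c • (lp.single 2 0 1 : H2)), z - W z⟫
        = ⟪(x - W x) + c • (lp.single 2 0 1 : H2), L ⟨z - W z, hu⟩⟫
      rw [hL z hu]
      simp only [inner_smul_left, inner_smul_right, inner_sub_left, inner_sub_right,
        inner_add_left, inner_add_right, hWinner, h0W, Complex.conj_I]
      ring
  refine ⟨part1, part2, ?_⟩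
  intro heq
  have h1 : (lp.single 2 0 1 : H2) ∈ L.adjoint.domain := by
    refine (part1 _).mpr ⟨0, 1, ?_⟩
    rw [map_zero, sub_zero, one_smul, zero_add]
  rw [heq] at h1
  exact part2 ((hdom _).mp h1)
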